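/- Let H be a complex Hilbert space, let A and B be Hilbert–Schmidt operators on H, and let 0 ≤ ν ≤ 1. Let T denote the block operator [[A, B],[0, 0]] on H ⊕ H. Then w_{(2,ν)}(T)² = w_{(2,ν)}(A)² + (2ν² - 2ν + 1) ‖B‖₂². -/

import Mathlib

/-!
The squared Hilbert–Schmidt norm `∑ᵢ ‖T eᵢ‖²`, taken in `ℝ≥0∞`, is invariant under adjoints and
independent of the Hilbert basis: both follow by exchanging the double sum `∑ᵢ ∑ⱼ |⟪fⱼ, T eᵢ⟫|²`.
In the basis `{(eᵢ, 0), (0, eᵢ)}` of `H ⊕ H` the operator `ν e^{iθ} T + (1-ν) e^{-iθ} T*` is the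
block matrix `[[ν e^{iθ} A + (1-ν) e^{-iθ} A*, ν e^{iθ} B], [(1-ν) e^{-iθ} B*, 0]]`, so its squared
norm is `‖ν e^{iθ} A + (1-ν) e^{-iθ} A*‖₂² + (ν² + (1-ν)²) ‖B‖₂²` for every `θ`. The supremum over
`θ` then passes through the increasing continuous map `t ↦ √(t² + c)`.
-/

variable {H : Type*} [NormedAddCommGroup H] [InnerProductSpace ℂ H] [CompleteSpace H]

/-- The operator `ν e^{iθ} A + (1-ν) e^{-iθ} A*`. -/
noncomputable def weightedPart {E : Type*} [NormedAddCommGroup E] [InnerProductSpace ℂ E]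
    [CompleteSpace E] (ν θ : ℝ) (A : E →L[ℂ] E) : E →L[ℂ] E :=
  ((ν : ℂ) * Complex.exp (θ * Complex.I)) • A +
    (((1 - ν : ℝ) : ℂ) * Complex.exp (-(θ * Complex.I))) • ContinuousLinearMap.adjoint A

/-- The Hilbert–Schmidt norm `‖A‖₂ = √(∑ᵢ ‖A eᵢ‖²)` computed w.r.t. a Hilbert basis `e`. -/
noncomputable def hsNorm {E : Type*} [NormedAddCommGroup E] [InnerProductSpace ℂ E]
    {ι : Type*} (e : HilbertBasis ι ℂ E) (A : E →L[ℂ] E) : ℝ :=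
  Real.sqrt (∑' i, ‖A (e i)‖ ^ 2)

/-- The trace `tr(T) = ∑ᵢ ⟨eᵢ, T eᵢ⟩` computed w.r.t. a Hilbert basis `e`. -/
noncomputable def trBasis {E : Type*} [NormedAddCommGroup E] [InnerProductSpace ℂ E]
    {ι : Type*} (e : HilbertBasis ι ℂ E) (T : E →L[ℂ] E) : ℂ :=
  ∑' i, (inner ℂ (e i) (T (e i)) : ℂ)

/-- The weighted Hilbert–Schmidt numerical radius
`w_{(2,ν)}(A) = sup_{θ ∈ ℝ} ‖ν e^{iθ} A + (1-ν) e^{-iθ} A*‖₂`. -/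
noncomputable def wHS {E : Type*} [NormedAddCommGroup E] [InnerProductSpace ℂ E]
    [CompleteSpace E] {ι : Type*} (e : HilbertBasis ι ℂ E) (ν : ℝ) (A : E →L[ℂ] E) : ℝ :=
  ⨆ θ : ℝ, hsNorm e (weightedPart ν θ A)

/-- The block operator `[[X, Y],[Z, W]]` on the Hilbert space direct sum `H ⊕₂ H`,
mapping `(x, y)` to `(Xx + Yy, Zx + Wy)`. -/
noncomputable def blockOp (X Y Z W : H →L[ℂ] H) :
    WithLp 2 (H × H) →L[ℂ] WithLp 2 (H × H) :=
  ((WithLp.prodContinuousLinearEquiv 2 ℂ H H).symm.toContinuousLinearMap).comp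
    ((((X.comp (ContinuousLinearMap.fst ℂ H H)) + (Y.comp (ContinuousLinearMap.snd ℂ H H))).prod
      ((Z.comp (ContinuousLinearMap.fst ℂ H H)) + (W.comp (ContinuousLinearMap.snd ℂ H H)))).comp
      (WithLp.prodContinuousLinearEquiv 2 ℂ H H).toContinuousLinearMap)


open scoped ENNReal InnerProductSpace
open ContinuousLinearMap (adjoint)

namespace HilbertBasis

variable {𝕜 E F : Type*} [RCLike 𝕜] [NormedAddCommGroup E] [InnerProductSpace 𝕜 E]
  [NormedAddCommGroup F] [InnerProductSpace 𝕜 F] {ι κ : Type*}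

theorem tsum_enorm_inner_sq (b : HilbertBasis ι 𝕜 E) (x : E) :
    ∑' i, ‖⟪b i, x⟫_𝕜‖ₑ ^ 2 = ‖x‖ₑ ^ 2 := by
  have h := lp.hasSum_norm (p := 2) (by norm_num) (b.repr x)
  simp only [b.repr_apply_apply, LinearIsometryEquiv.norm_map, ENNReal.toReal_ofNat,
    Real.rpow_ofNat] at h
  simp_rw [← ofReal_norm, ← ENNReal.ofReal_pow (norm_nonneg _)]
  rw [← ENNReal.ofReal_tsum_of_nonneg (fun _ => by positivity) h.summable, h.tsum_eq]

theorem eq_zero_of_forall_inner_eq_zero (b : HilbertBasis ι 𝕜 E) {x : E}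
    (h : ∀ i, ⟪b i, x⟫_𝕜 = 0) : x = 0 := by
  refine b.repr.injective ?_
  ext i
  simp [b.repr_apply_apply, h]

variable [CompleteSpace E] [CompleteSpace F]

protected noncomputable def prod (b : HilbertBasis ι 𝕜 E) (c : HilbertBasis κ 𝕜 F) :
    HilbertBasis (ι ⊕ κ) 𝕜 (WithLp 2 (E × F)) :=
  HilbertBasis.mkOfOrthogonalEqBot
    (v := Sum.elim (fun i => WithLp.toLp 2 (b i, 0)) (fun j => WithLp.toLp 2 (0, c j)))
    (by
      classical
      rw [orthonormal_iff_ite]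
      rintro (i | j) (i' | j') <;>
        simp [WithLp.prod_inner_apply, orthonormal_iff_ite.mp b.orthonormal,
          orthonormal_iff_ite.mp c.orthonormal])
    (by
      refine (Submodule.eq_bot_iff _).2 fun x hx => ?_
      have hx u := Submodule.inner_right_of_mem_orthogonal
        (Submodule.subset_span (Set.mem_range_self u)) hx
      have hfst : x.fst = 0 := b.eq_zero_of_forall_inner_eq_zero fun i => by
        simpa [WithLp.prod_inner_apply] using hx (.inl i)
      have hsnd : x.snd = 0 := c.eq_zero_of_forall_inner_eq_zero fun j => by
        simpa [WithLp.prod_inner_apply] using hx (.inr j)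
      exact (WithLp.ext_iff 2).2 (Prod.ext hfst hsnd))

@[simp]
theorem prod_apply_inl (b : HilbertBasis ι 𝕜 E) (c : HilbertBasis κ 𝕜 F) (i : ι) :
    b.prod c (.inl i) = WithLp.toLp 2 (b i, 0) := by
  simp [HilbertBasis.prod]

@[simp]
theorem prod_apply_inr (b : HilbertBasis ι 𝕜 E) (c : HilbertBasis κ 𝕜 F) (j : κ) :
    b.prod c (.inr j) = WithLp.toLp 2 (0, c j) := by
  simp [HilbertBasis.prod]

end HilbertBasis

section HilbertSchmidt

variable {𝕜 E F : Type*} [RCLike 𝕜] [NormedAddCommGroup E] [InnerProductSpace 𝕜 E]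
  [NormedAddCommGroup F] [InnerProductSpace 𝕜 F] {ι κ : Type*}

/-- Valued in `ℝ≥0∞`, so that no summability hypothesis is needed. -/
noncomputable def hsENormSq (b : HilbertBasis ι 𝕜 E) (T : E →L[𝕜] F) : ℝ≥0∞ :=
  ∑' i, ‖T (b i)‖ₑ ^ 2

@[simp]
theorem hsENormSq_zero (b : HilbertBasis ι 𝕜 E) : hsENormSq b (0 : E →L[𝕜] F) = 0 := by
  simp [hsENormSq]

theorem hsENormSq_smul (b : HilbertBasis ι 𝕜 E) (a : 𝕜) (T : E →L[𝕜] F) :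
    hsENormSq b (a • T) = ‖a‖ₑ ^ 2 * hsENormSq b T := by
  simp only [hsENormSq, smul_apply, enorm_smul, mul_pow, ENNReal.tsum_mul_left]

theorem hsENormSq_add_le (b : HilbertBasis ι 𝕜 E) (S T : E →L[𝕜] F) :
    hsENormSq b (S + T) ≤ 2 * (hsENormSq b S + hsENormSq b T) := by
  rw [hsENormSq, hsENormSq, hsENormSq, ← ENNReal.tsum_add, ← ENNReal.tsum_mul_left]
  refine ENNReal.tsum_le_tsum fun i => ?_
  simp only [add_apply, enorm_eq_nnnorm]
  exact_mod_cast (pow_le_pow_left₀ zero_le (nnnorm_add_le _ _) 2).trans add_sq_le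

theorem hsENormSq_ne_top_of_summable (b : HilbertBasis ι 𝕜 E) {T : E →L[𝕜] F}
    (hT : Summable fun i => ‖T (b i)‖ ^ 2) : hsENormSq b T ≠ ⊤ := by
  simp_rw [hsENormSq, ← ofReal_norm, ← ENNReal.ofReal_pow (norm_nonneg _),
    ← ENNReal.ofReal_tsum_of_nonneg (fun _ => by positivity) hT]
  exact ENNReal.ofReal_ne_top

variable [CompleteSpace E] [CompleteSpace F]

theorem hsENormSq_adjoint (b : HilbertBasis ι 𝕜 E) (c : HilbertBasis κ 𝕜 F) (T : E →L[𝕜] F) :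
    hsENormSq c (adjoint T) = hsENormSq b T := by
  simp only [hsENormSq, ← b.tsum_enorm_inner_sq (adjoint T _), ← c.tsum_enorm_inner_sq (T _),
    ContinuousLinearMap.adjoint_inner_right]
  rw [ENNReal.tsum_comm]
  refine tsum_congr fun i => tsum_congr fun j => ?_
  rw [← inner_conj_symm, RCLike.enorm_conj]

theorem hsENormSq_eq_of_basis (b : HilbertBasis ι 𝕜 E) (b' : HilbertBasis κ 𝕜 E)
    (T : E →L[𝕜] F) : hsENormSq b T = hsENormSq b' T := by
  obtain ⟨_, c, -⟩ := exists_hilbertBasis 𝕜 F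
  rw [← hsENormSq_adjoint b c, hsENormSq_adjoint b' c]

end HilbertSchmidt

theorem hsNorm_eq_sqrt_toReal {E ι : Type*} [NormedAddCommGroup E] [InnerProductSpace ℂ E]
    (b : HilbertBasis ι ℂ E) (T : E →L[ℂ] E) : hsNorm b T = √(hsENormSq b T).toReal := by
  rw [hsNorm, hsENormSq, ENNReal.tsum_toReal_eq fun _ => by finiteness]
  simp

theorem WithLp.prod_enorm_sq_eq_of_L2 {α β : Type*} [SeminormedAddCommGroup α]
    [SeminormedAddCommGroup β] (x : WithLp 2 (α × β)) :
    ‖x‖ₑ ^ 2 = ‖x.fst‖ₑ ^ 2 + ‖x.snd‖ₑ ^ 2 := by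
  simp only [← ofReal_norm, ← ENNReal.ofReal_pow (norm_nonneg _),
    ← ENNReal.ofReal_add (sq_nonneg _) (sq_nonneg _), WithLp.prod_norm_sq_eq_of_L2]

theorem enorm_ofReal_mul_exp_sq (r : ℝ) {z : ℂ} (hz : z.re = 0) :
    ‖(r : ℂ) * Complex.exp z‖ₑ ^ 2 = ENNReal.ofReal (r ^ 2) := by
  rw [← ofReal_norm, norm_mul, Complex.norm_exp, hz, Real.exp_zero, mul_one, Complex.norm_real,
    Real.norm_eq_abs, ← ENNReal.ofReal_pow (abs_nonneg _), sq_abs]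

theorem hsENormSq_weightedPart_le {E ι : Type*} [NormedAddCommGroup E] [InnerProductSpace ℂ E]
    [CompleteSpace E] (b : HilbertBasis ι ℂ E) (ν θ : ℝ) (A : E →L[ℂ] E) :
    hsENormSq b (weightedPart ν θ A) ≤
      2 * ENNReal.ofReal (ν ^ 2 + (1 - ν) ^ 2) * hsENormSq b A := by
  refine (hsENormSq_add_le b _ _).trans_eq ?_
  rw [hsENormSq_smul, hsENormSq_smul, hsENormSq_adjoint b b,
    enorm_ofReal_mul_exp_sq _ (by simp), enorm_ofReal_mul_exp_sq _ (by simp),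
    ENNReal.ofReal_add (sq_nonneg _) (sq_nonneg _)]
  ring

theorem hsENormSq_weightedPart_ne_top {E ι : Type*} [NormedAddCommGroup E]
    [InnerProductSpace ℂ E] [CompleteSpace E] (b : HilbertBasis ι ℂ E) (ν θ : ℝ) {A : E →L[ℂ] E}
    (hA : Summable fun i => ‖A (b i)‖ ^ 2) : hsENormSq b (weightedPart ν θ A) ≠ ⊤ := by
  have := hsENormSq_ne_top_of_summable b hA
  exact ne_top_of_le_ne_top (by finiteness) (hsENormSq_weightedPart_le b ν θ A)

theorem bddAbove_range_hsNorm_weightedPart {E ι : Type*} [NormedAddCommGroup E]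
    [InnerProductSpace ℂ E] [CompleteSpace E] (b : HilbertBasis ι ℂ E) (ν : ℝ) {A : E →L[ℂ] E}
    (hA : Summable fun i => ‖A (b i)‖ ^ 2) :
    BddAbove (Set.range fun θ => hsNorm b (weightedPart ν θ A)) := by
  have := hsENormSq_ne_top_of_summable b hA
  refine ⟨√(2 * ENNReal.ofReal (ν ^ 2 + (1 - ν) ^ 2) * hsENormSq b A).toReal, ?_⟩
  rintro _ ⟨θ, rfl⟩
  exact (hsNorm_eq_sqrt_toReal b _).trans_le <|
    Real.sqrt_le_sqrt (ENNReal.toReal_mono (by finiteness) (hsENormSq_weightedPart_le b ν θ A))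

section BlockOperator

variable {ι κ : Type*}

omit [CompleteSpace H] in
@[simp]
theorem ofLp_blockOp (X Y Z W : H →L[ℂ] H) (u : WithLp 2 (H × H)) :
    (blockOp X Y Z W u).ofLp = (X u.ofLp.1 + Y u.ofLp.2, Z u.ofLp.1 + W u.ofLp.2) := rfl

theorem blockOp_adjoint (X Y Z W : H →L[ℂ] H) :
    adjoint (blockOp X Y Z W) = blockOp (adjoint X) (adjoint Z) (adjoint Y) (adjoint W) := by
  refine ((ContinuousLinearMap.eq_adjoint_iff _ _).2 fun u v => ?_).symm
  simp only [WithLp.prod_inner_apply, ofLp_blockOp, inner_add_left, inner_add_right,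
    ContinuousLinearMap.adjoint_inner_left]
  ring

theorem hsENormSq_blockOp (e : HilbertBasis ι ℂ H) (X Y Z W : H →L[ℂ] H) :
    hsENormSq (e.prod e) (blockOp X Y Z W) =
      hsENormSq e X + hsENormSq e Z + (hsENormSq e Y + hsENormSq e W) := by
  rw [hsENormSq, ENNReal.summable.tsum_sum ENNReal.summable]
  simp only [HilbertBasis.prod_apply_inl, HilbertBasis.prod_apply_inr,
    WithLp.prod_enorm_sq_eq_of_L2]
  simp [WithLp.fst, WithLp.snd, ENNReal.tsum_add, hsENormSq]

theorem weightedPart_blockOp (ν θ : ℝ) (A B : H →L[ℂ] H) :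
    weightedPart ν θ (blockOp A B 0 0) =
      blockOp (weightedPart ν θ A) (((ν : ℂ) * Complex.exp (θ * Complex.I)) • B)
        ((((1 - ν : ℝ) : ℂ) * Complex.exp (-(θ * Complex.I))) • adjoint B) 0 := by
  ext u : 1
  refine (WithLp.ext_iff 2).2 (Prod.ext ?_ ?_)
  · simp [weightedPart, blockOp_adjoint]
    abel
  · simp [weightedPart, blockOp_adjoint]

theorem hsENormSq_weightedPart_blockOp (e : HilbertBasis ι ℂ H)
    (f : HilbertBasis κ ℂ (WithLp 2 (H × H))) (ν θ : ℝ) (A B : H →L[ℂ] H) :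
    hsENormSq f (weightedPart ν θ (blockOp A B 0 0)) =
      hsENormSq e (weightedPart ν θ A) +
        ENNReal.ofReal (2 * ν ^ 2 - 2 * ν + 1) * hsENormSq e B := by
  rw [hsENormSq_eq_of_basis f (e.prod e), weightedPart_blockOp, hsENormSq_blockOp,
    hsENormSq_smul, hsENormSq_smul, hsENormSq_adjoint e e,
    enorm_ofReal_mul_exp_sq _ (by simp), enorm_ofReal_mul_exp_sq _ (by simp),
    show 2 * ν ^ 2 - 2 * ν + 1 = ν ^ 2 + (1 - ν) ^ 2 by ring,
    ENNReal.ofReal_add (sq_nonneg _) (sq_nonneg _), hsENormSq_zero]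
  ring

theorem hsNorm_weightedPart_blockOp (e : HilbertBasis ι ℂ H)
    (f : HilbertBasis κ ℂ (WithLp 2 (H × H))) (ν θ : ℝ) {A B : H →L[ℂ] H}
    (hA : Summable fun i => ‖A (e i)‖ ^ 2) (hB : Summable fun i => ‖B (e i)‖ ^ 2) :
    hsNorm f (weightedPart ν θ (blockOp A B 0 0)) =
      √(hsNorm e (weightedPart ν θ A) ^ 2 + (2 * ν ^ 2 - 2 * ν + 1) * hsNorm e B ^ 2) := by
  have hcoef : 0 ≤ 2 * ν ^ 2 - 2 * ν + 1 := by nlinarith [sq_nonneg (2 * ν - 1)]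
  simp only [hsNorm_eq_sqrt_toReal, hsENormSq_weightedPart_blockOp e f,
    Real.sq_sqrt ENNReal.toReal_nonneg]
  rw [ENNReal.toReal_add (hsENormSq_weightedPart_ne_top e ν θ hA)
    (ENNReal.mul_ne_top ENNReal.ofReal_ne_top (hsENormSq_ne_top_of_summable e hB)),
    ENNReal.toReal_mul, ENNReal.toReal_ofReal hcoef]

end BlockOperator

theorem sq_ciSup_sqrt_sq_add {α : Sort*} [Nonempty α] {g : α → ℝ} (hg : ∀ a, 0 ≤ g a)
    (hbdd : BddAbove (Set.range g)) {c : ℝ} (hc : 0 ≤ c) :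
    (⨆ a, √(g a ^ 2 + c)) ^ 2 = (⨆ a, g a) ^ 2 + c := by
  -- `t ↦ √(max t 0 ^ 2 + c)` is monotone and continuous on all of `ℝ`, and agrees with
  -- `t ↦ √(t ^ 2 + c)` on the values of `g`.
  set φ : ℝ → ℝ := fun t => √(max t 0 ^ 2 + c)
  have hφ : Monotone φ := fun s t hst => by
    have := max_le_max_right 0 hst
    simp only [φ]
    gcongr
  have hsup : (⨆ a, φ (g a)) = φ (⨆ a, g a) :=
    (hφ.map_ciSup_of_continuousAt (by fun_prop) hbdd).symm
  simp only [φ, max_eq_left (hg _), max_eq_left (Real.iSup_nonneg hg)] at hsup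
  rw [hsup, Real.sq_sqrt (by positivity)]

theorem stmt14_general {ι κ : Type*} (e : HilbertBasis ι ℂ H)
    (f : HilbertBasis κ ℂ (WithLp 2 (H × H)))
    (A B : H →L[ℂ] H)
    (hA : Summable fun i => ‖A (e i)‖ ^ 2) (hB : Summable fun i => ‖B (e i)‖ ^ 2)
    (ν : ℝ) :
    (wHS f ν (blockOp A B 0 0)) ^ 2 =
      (wHS e ν A) ^ 2 + (2 * ν ^ 2 - 2 * ν + 1) * (hsNorm e B) ^ 2 := by
  have hcoef : 0 ≤ 2 * ν ^ 2 - 2 * ν + 1 := by nlinarith [sq_nonneg (2 * ν - 1)]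
  simp only [wHS, hsNorm_weightedPart_blockOp e f ν _ hA hB]
  exact sq_ciSup_sqrt_sq_add (fun _ => Real.sqrt_nonneg _)
    (bddAbove_range_hsNorm_weightedPart e ν hA) (by positivity)

theorem stmt14 {ι κ : Type*} (e : HilbertBasis ι ℂ H)
    (f : HilbertBasis κ ℂ (WithLp 2 (H × H)))
    (A B : H →L[ℂ] H)
    (hA : Summable fun i => ‖A (e i)‖ ^ 2) (hB : Summable fun i => ‖B (e i)‖ ^ 2)
    (ν : ℝ) (hν₀ : 0 ≤ ν) (hν₁ : ν ≤ 1) :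
    (wHS f ν (blockOp A B 0 0)) ^ 2 =
      (wHS e ν A) ^ 2 + (2 * ν ^ 2 - 2 * ν + 1) * (hsNorm e B) ^ 2 :=
  stmt14_general e f A B hA hB ν
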